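/- Let φ be a CNF formula with variables v_1,…,v_n and clauses C_1,…,C_m, each clause containing at most three literals, such that each variable v_i appears exactly twice as a positive literal (in the clauses with indices p₁^i and p₂^i) and exactly once as a negative literal (in the clause with index n^i). Let U = (ℤ ∪ {−∞})³ ordered componentwise, where −∞ is less than every integer. Define x_i = ((i, p₁^i, −p₁^i), (−i, p₂^i, −p₂^i)) and x'_i = ((i, n^i, −n^i), (−i, −∞, −∞)), X = {x_i, x'_i : 1 ≤ i ≤ n}; y_i = ((i, −∞, −∞), (−i, −∞, −∞)) and Y = {y_i : 1 ≤ i ≤ n}; z_j = (−∞, j, −j) and Z = {z_j : 1 ≤ j ≤ m}. If ⟨(U, ≼), X, (Y, Z)⟩ is a yes-instance of Inclusive Poset Pair Cover, then φ is satisfiable. -/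
import Mathlib


/-- The ground poset `U = (ℤ ∪ {−∞})³`, ordered componentwise (`⊥` plays the role of `−∞`). -/
abbrev UU : Type := WithBot ℤ × WithBot ℤ × WithBot ℤ

/-- Inclusive Poset Pair Cover: the instance `⟨(β,≼), X, (Y,Z)⟩` is a yes-instance if there
are injections `f : Y → X` and `g : Z → X × {1,2}` such that (i) no value of `f` occurs as the
`X`-component of a value of `g`, (ii) `f (y₁,y₂) = (x₁,x₂)` implies `y₁ ≼ x₁ ∧ y₂ ≼ x₂` or
`y₂ ≼ x₁ ∧ y₁ ≼ x₂`, and (iii) `g z = ((x₁,x₂), i)` implies `z ≼ xᵢ`. -/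
def IPPCYes {β : Type*} [PartialOrder β] (X Y : Finset (β × β)) (Z : Finset β) : Prop :=
  ∃ (f : {y // y ∈ Y} → {x // x ∈ X}) (g : {z // z ∈ Z} → {x // x ∈ X} × Fin 2),
    Function.Injective f ∧ Function.Injective g ∧
    (∀ y z, f y ≠ (g z).1) ∧
    (∀ y : {y // y ∈ Y}, (y.1.1 ≤ (f y).1.1 ∧ y.1.2 ≤ (f y).1.2) ∨
          (y.1.2 ≤ (f y).1.1 ∧ y.1.1 ≤ (f y).1.2)) ∧
    (∀ z : {z // z ∈ Z}, z.1 ≤ (if (g z).2 = 0 then (g z).1.1.1 else (g z).1.1.2))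

/-- The integer `c+1` (1-based index of `c : Fin _`) as an element of `ℤ ∪ {−∞}`. -/
def ip (c : ℕ) : WithBot ℤ := (((c : ℤ) + 1 : ℤ) : WithBot ℤ)

/-- The integer `−(c+1)` as an element of `ℤ ∪ {−∞}`. -/
def im (c : ℕ) : WithBot ℤ := ((-((c : ℤ) + 1) : ℤ) : WithBot ℤ)

/-- `x_i = ((i, p₁ⁱ, −p₁ⁱ), (−i, p₂ⁱ, −p₂ⁱ))` (1-based indices). -/
def xElt {n m : ℕ} (p1 p2 : Fin n → Fin m) (i : Fin n) : UU × UU :=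
  ((ip i.val, ip (p1 i).val, im (p1 i).val), (im i.val, ip (p2 i).val, im (p2 i).val))

/-- `x'_i = ((i, nⁱ, −nⁱ), (−i, −∞, −∞))` (1-based indices). -/
def xElt' {n m : ℕ} (nn : Fin n → Fin m) (i : Fin n) : UU × UU :=
  ((ip i.val, ip (nn i).val, im (nn i).val), (im i.val, ⊥, ⊥))

/-- `y_i = ((i, −∞, −∞), (−i, −∞, −∞))`. -/
def yElt {n : ℕ} (i : Fin n) : UU × UU :=
  ((ip i.val, ⊥, ⊥), (im i.val, ⊥, ⊥))

/-- `z_j = (−∞, j, −j)`. -/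
def zElt {m : ℕ} (j : Fin m) : UU :=
  (⊥, ip j.val, im j.val)

/-- `X = {x_i, x'_i : 1 ≤ i ≤ n}`. -/
def Xfam {n m : ℕ} (p1 p2 nn : Fin n → Fin m) : Finset (UU × UU) :=
  Finset.univ.image (xElt p1 p2) ∪ Finset.univ.image (xElt' nn)

/-- `Y = {y_i : 1 ≤ i ≤ n}`. -/
def Yfam (n : ℕ) : Finset (UU × UU) := Finset.univ.image (yElt (n := n))

/-- `Z = {z_j : 1 ≤ j ≤ m}`. -/
def Zfam (m : ℕ) : Finset UU := Finset.univ.image (zElt (m := m))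


lemma ip_le_ip {a b : ℕ} : ip a ≤ ip b ↔ a ≤ b := by
  simp only [ip, WithBot.coe_le_coe]; omega

lemma im_le_im {a b : ℕ} : im a ≤ im b ↔ b ≤ a := by
  simp only [im, WithBot.coe_le_coe]; omega

lemma not_ip_le_im {a b : ℕ} : ¬ ip a ≤ im b := by
  simp only [ip, im, WithBot.coe_le_coe]; omega

lemma not_ip_le_bot {a : ℕ} : ¬ ip a ≤ (⊥ : WithBot ℤ) := WithBot.not_coe_le_bot _

lemma mem_Xfam {n m : ℕ} {p1 p2 nn : Fin n → Fin m} {x : UU × UU} :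
    x ∈ Xfam p1 p2 nn ↔ ∃ i, x = xElt p1 p2 i ∨ x = xElt' nn i := by
  simp [Xfam, eq_comm, or_and_right, exists_or]

lemma xElt_ne_xElt' {n m : ℕ} {p1 p2 nn : Fin n → Fin m} (i i' : Fin n) :
    xElt p1 p2 i ≠ xElt' nn i' := by
  intro h
  have := congrArg (fun x => x.2.2.1) h
  simp only [xElt, xElt'] at this
  exact WithBot.coe_ne_bot this

/-- Let `C` be a CNF formula (clauses of at most three literals) in which each variable `i`
occurs positively exactly in clauses `p₁ i` and `p₂ i` (distinct) and negatively exactly in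
clause `nn i`. If `⟨(U,≼), X, (Y,Z)⟩` is a yes-instance of Inclusive Poset Pair Cover, then
the formula is satisfiable. -/
theorem stmt_9 {n m : ℕ} (C : Fin m → Finset (Bool × Fin n))
    (hsize : ∀ j, (C j).card ≤ 3)
    (p1 p2 nn : Fin n → Fin m)
    (hp12 : ∀ i, p1 i ≠ p2 i)
    (hpos : ∀ i j, (true, i) ∈ C j ↔ (j = p1 i ∨ j = p2 i))
    (hneg : ∀ i j, (false, i) ∈ C j ↔ j = nn i)
    (hyes : IPPCYes (Xfam p1 p2 nn) (Yfam n) (Zfam m)) :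
    ∃ σ : Fin n → Bool, ∀ j, ∃ l ∈ C j, σ l.2 = l.1 := by
  obtain ⟨f, g, hfinj, hginj, hdisj, hford, hgord⟩ := hyes
  have hyMem : ∀ i : Fin n, yElt i ∈ Yfam n := fun i => by
    simp [Yfam]
  have hzMem : ∀ j : Fin m, zElt j ∈ Zfam m := fun j => by
    simp [Zfam]
  set F : Fin n → UU × UU := fun i => (f ⟨yElt i, hyMem i⟩).1 with hF
  -- each F i is xElt i or xElt' i
  have hFkey : ∀ i, F i = xElt p1 p2 i ∨ F i = xElt' nn i := by
    intro i
    obtain ⟨i', hi'⟩ := mem_Xfam.1 (f ⟨yElt i, hyMem i⟩).2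
    have hord := hford ⟨yElt i, hyMem i⟩
    rcases hi' with h | h
    · left
      simp only [hF]; rw [h] at hord ⊢
      rcases hord with ⟨h1, h2⟩ | ⟨h1, h2⟩
      · have e1 : i.val ≤ i'.val := ip_le_ip.1 h1.1
        have e2 : i'.val ≤ i.val := im_le_im.1 h2.1
        have : i = i' := Fin.ext (le_antisymm e1 e2)
        rw [this]
      · exact absurd h2.1 (by simpa [yElt, xElt, Prod.le_def] using not_ip_le_im)
    · right
      simp only [hF]; rw [h] at hord ⊢
      rcases hord with ⟨h1, h2⟩ | ⟨h1, h2⟩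
      · have e1 : i.val ≤ i'.val := ip_le_ip.1 h1.1
        have e2 : i'.val ≤ i.val := im_le_im.1 h2.1
        have : i = i' := Fin.ext (le_antisymm e1 e2)
        rw [this]
      · exact absurd h2.1 (by simpa [yElt, xElt', Prod.le_def] using not_ip_le_im)
  classical
  refine ⟨fun i => decide (F i = xElt' nn i), fun j => ?_⟩
  -- analyze g (z j)
  set G := g ⟨zElt j, hzMem j⟩ with hG
  obtain ⟨i, hi⟩ := mem_Xfam.1 G.1.2
  have hord := hgord ⟨zElt j, hzMem j⟩
  have hne : ∀ i₀ : Fin n, F i₀ ≠ G.1.1 := fun i₀ => by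
    have := hdisj ⟨yElt i₀, hyMem i₀⟩ ⟨zElt j, hzMem j⟩
    exact fun h => this (Subtype.ext h)
  rcases hi with h | h
  · -- G.1 = xElt i : a positive occurrence covers clause j
    have hFi : F i = xElt' nn i := by
      rcases hFkey i with h' | h'
      · exact absurd (h'.trans h.symm) (hne i)
      · exact h'
    have hσ : decide (F i = xElt' nn i) = true := by simp [hFi]
    refine ⟨(true, i), ?_, hσ⟩
    rw [hpos]
    by_cases h2 : G.2 = 0
    · left
      rw [if_pos h2, h] at hord
      simp only [zElt, xElt, Prod.le_def] at hord
      have e1 : j.val ≤ (p1 i).val := ip_le_ip.1 hord.2.1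
      have e2 : (p1 i).val ≤ j.val := im_le_im.1 hord.2.2
      exact Fin.ext (le_antisymm e1 e2)
    · right
      rw [if_neg h2, h] at hord
      simp only [zElt, xElt, Prod.le_def] at hord
      have e1 : j.val ≤ (p2 i).val := ip_le_ip.1 hord.2.1
      have e2 : (p2 i).val ≤ j.val := im_le_im.1 hord.2.2
      exact Fin.ext (le_antisymm e1 e2)
  · -- G.1 = xElt' i : a negative occurrence covers clause j
    have hFi : F i = xElt p1 p2 i := by
      rcases hFkey i with h' | h'
      · exact h'
      · exact absurd (h'.trans h.symm) (hne i)
    have hσ : decide (F i = xElt' nn i) = false := by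
      simp [hFi, xElt_ne_xElt']
    refine ⟨(false, i), ?_, hσ⟩
    rw [hneg]
    by_cases h2 : G.2 = 0
    · rw [if_pos h2, h] at hord
      simp only [zElt, xElt', Prod.le_def] at hord
      have e1 : j.val ≤ (nn i).val := ip_le_ip.1 hord.2.1
      have e2 : (nn i).val ≤ j.val := im_le_im.1 hord.2.2
      exact Fin.ext (le_antisymm e1 e2)
    · rw [if_neg h2, h] at hord
      simp only [zElt, xElt', Prod.le_def] at hord
      exact absurd hord.2.1 not_ip_le_bot
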